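/- arXiv:1409.2922 — 6 statements merged into one kernel-verified Lean document; each statement's English description precedes it below -/
import Mathlib

section
/- Let (T, ≤) be a set-theoretic tree with no uncountable chains and let s, t ∈ T be incomparable. Then in the comparability graph G(T), every path (in the graph-theoretic sense) from s to t passes through the set s↓ = {r ∈ T : r < s}; moreover s↓ is countable. In particular, any two incomparable vertices of G(T) are separated by a countable set. -/
/-- The comparability graph of a partial order. -/
def compGraph (T : Type*) [PartialOrder T] : SimpleGraph T where
  Adj x y := x < y ∨ y < x
  symm := ⟨by intro x y h; tauto⟩
  loopless := ⟨by intro x h; rcases h with h | h <;> exact lt_irrefl x h⟩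

/-- In a set-theoretic tree with no uncountable chains, every path in the comparability
graph between two incomparable vertices `s`, `t` passes through the countable set
`s↓ = {r | r < s}`; in particular any two incomparable vertices are separated by a
countable set. -/
theorem incomparable_separated_by_countable {T : Type*} [PartialOrder T]
    (hwo : ∀ t : T, IsWellOrder {s : T // s < t} (· < ·))
    (hch : ∀ A : Set T, IsChain (· ≤ ·) A → A.Countable)
    (s t : T) (hst : ¬ s ≤ t) (hts : ¬ t ≤ s) :
    (∀ p : (compGraph T).Walk s t, ∃ r ∈ p.support, r < s) ∧ (Set.Iio s).Countable := by
  have comp : ∀ u a b : T, a < u → b < u → a ≤ b ∨ b ≤ a := by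
    intro u a b ha hb
    have htri := (hwo u).toTrichotomous
    rcases @trichotomous _ (· < ·) htri ⟨a, ha⟩ ⟨b, hb⟩ with h | h | h
    · exact Or.inl (le_of_lt (Subtype.mk_lt_mk.mp h))
    · exact Or.inl (le_of_eq (congrArg Subtype.val h))
    · exact Or.inr (le_of_lt (Subtype.mk_lt_mk.mp h))
  constructor
  · have aux : ∀ u : T, s ≤ u → ∀ p : (compGraph T).Walk u t,
        (∃ r ∈ p.support, r < s) ∨ s ≤ t := by
      intro u hu p
      induction p with
      | nil => exact Or.inr hu
      | @cons u v w h q ih =>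
        by_cases hvs : v < s
        · exact Or.inl ⟨v, by simp, hvs⟩
        · have hsv : s ≤ v := by
            rcases h with h | h
            · exact le_of_lt (lt_of_le_of_lt hu h)
            · rcases eq_or_lt_of_le hu with rfl | hu'
              · exact absurd h hvs
              · rcases comp _ v s h hu' with h1 | h1
                · rcases lt_or_eq_of_le h1 with h2 | h2
                  · exact absurd h2 hvs
                  · exact le_of_eq h2.symm
                · exact h1
          rcases ih hst hts hsv with ⟨r, hr, hr'⟩ | h'
          · exact Or.inl ⟨r, by simp [hr], hr'⟩
          · exact Or.inr h'
    intro p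
    rcases aux s le_rfl p with h | h
    · exact h
    · exact absurd h hst
  · exact hch _ (fun a ha b hb _ => comp s a b ha hb)
end

section
/- Let T be a set-theoretic tree and C̄ = (C_t : t ∈ T) a transitive ladder system on T, meaning C_t ⊆ t↓ for every t and C_t ∩ s↓ ⊆ C_s whenever s ∈ C_t. Let X be the graph on vertex set T with edges {s,t} for s ∈ C_t. If s, t ∈ T and P is a finite path in X from s to t, then there is a path Q ⊆ P from s to t which is the union of two monotone paths, i.e., Q is the concatenation of a path decreasing in the tree order followed by a path increasing in the tree order. -/
/-- The graph associated to a ladder system `C` on a tree: `x` and `y` are adjacent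
iff one of them lies on the ladder of the other. -/
def ladderGraph {T : Type*} [PartialOrder T] (C : T → Set T) : SimpleGraph T where
  Adj x y := x ≠ y ∧ (x ∈ C y ∨ y ∈ C x)
  symm := ⟨by intro x y ⟨h1, h2⟩; exact ⟨h1.symm, h2.symm⟩⟩
  loopless := ⟨by intro x ⟨h1, _⟩; exact h1 rfl⟩

section Aux

variable {T : Type*} [PartialOrder T]

lemma ladder_adj_cases {C : T → Set T} (hC : ∀ t : T, C t ⊆ Set.Iio t) {a b : T}
    (h : (ladderGraph C).Adj a b) : (a < b ∧ a ∈ C b) ∨ (b < a ∧ b ∈ C a) := by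
  obtain ⟨hne, h | h⟩ := h
  · exact Or.inl ⟨hC b h, h⟩
  · exact Or.inr ⟨hC a h, h⟩

lemma cmp_below (hwo : ∀ t : T, IsWellOrder {s : T // s < t} (· < ·)) {u a b : T}
    (ha : a < u) (hb : b < u) (hne : a ≠ b) : a < b ∨ b < a := by
  rcases (haveI := hwo u; trichotomous_of (r := (· < ·)) (⟨a, ha⟩ : {s : T // s < u}) ⟨b, hb⟩) with h | h | h
  · exact Or.inl (Subtype.mk_lt_mk.mp h)
  · exact absurd (congrArg Subtype.val h) hne
  · exact Or.inr (Subtype.mk_lt_mk.mp h)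

omit [PartialOrder T] in
lemma head_support {u v : T} {G : SimpleGraph T} (Q : G.Walk u v) :
    Q.support.head? = some u := by
  rw [Q.support_eq_cons]; rfl

/-- Key extension lemma: if a valley-shaped path can be extended by one edge at its
left end, then some valley-shaped path from the new vertex exists inside it. -/
lemma lemA (hwo : ∀ t : T, IsWellOrder {s : T // s < t} (· < ·))
    {C : T → Set T} (hC : ∀ t : T, C t ⊆ Set.Iio t)
    (htrans : ∀ t : T, ∀ s ∈ C t, C t ∩ Set.Iio s ⊆ C s) (s t : T) :
    ∀ {u m : T} (Q₁ : (ladderGraph C).Walk u m) (Q₂ : (ladderGraph C).Walk m t),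
      (Q₁.append Q₂).IsPath →
      List.Chain' (· > ·) Q₁.support →
      List.Chain' (· < ·) Q₂.support →
      (ladderGraph C).Adj s u →
      s ∉ (Q₁.append Q₂).support →
      ∃ (m' : T) (R₁ : (ladderGraph C).Walk s m') (R₂ : (ladderGraph C).Walk m' t),
        (R₁.append R₂).IsPath ∧
        (∀ v ∈ (R₁.append R₂).support, v = s ∨ v ∈ (Q₁.append Q₂).support) ∧
        List.Chain' (· > ·) R₁.support ∧
        List.Chain' (· < ·) R₂.support := by
  intro u m Q₁
  induction Q₁ with
  | @nil w =>
    intro Q₂ hpath hc1 hc2 hadj hs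
    rcases ladder_adj_cases hC hadj with ⟨hlt, hmem⟩ | ⟨hlt, hmem⟩
    · -- s < w : prepend to Q₂
      refine ⟨s, SimpleGraph.Walk.nil, SimpleGraph.Walk.cons hadj Q₂, ?_, ?_, ?_, ?_⟩
      · rw [SimpleGraph.Walk.nil_append, SimpleGraph.Walk.cons_isPath_iff]
        rw [SimpleGraph.Walk.nil_append] at hpath hs
        exact ⟨hpath, hs⟩
      · intro v hv
        rw [SimpleGraph.Walk.nil_append, SimpleGraph.Walk.support_cons,
          List.mem_cons] at hv
        rw [SimpleGraph.Walk.nil_append]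
        exact hv
      · simp [List.Chain']
      · rw [SimpleGraph.Walk.support_cons, List.Chain', List.isChain_cons]
        refine ⟨?_, hc2⟩
        intro b hb
        rw [head_support Q₂] at hb
        cases hb; exact hlt
    · -- w < s : prepend to Q₁ (which is nil)
      refine ⟨w, SimpleGraph.Walk.cons hadj SimpleGraph.Walk.nil, Q₂, ?_, ?_, ?_, hc2⟩
      · rw [SimpleGraph.Walk.cons_append, SimpleGraph.Walk.nil_append,
          SimpleGraph.Walk.cons_isPath_iff]
        rw [SimpleGraph.Walk.nil_append] at hpath hs
        exact ⟨hpath, hs⟩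
      · intro v hv
        rw [SimpleGraph.Walk.cons_append, SimpleGraph.Walk.nil_append,
          SimpleGraph.Walk.support_cons, List.mem_cons] at hv
        rw [SimpleGraph.Walk.nil_append]
        exact hv
      · simp [List.Chain', hlt]
  | @cons u' v m' h' Q₁'' ih =>
    intro Q₂ hpath hc1 hc2 hadj hs
    rcases ladder_adj_cases hC hadj with ⟨hlt, hmem⟩ | ⟨hlt, hmem⟩
    · -- s < u' : there is a peak at u'
      have hvu : v < u' := by
        rw [SimpleGraph.Walk.support_cons, List.Chain', List.isChain_cons] at hc1
        have := hc1.1 v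
        rw [head_support Q₁''] at this
        exact this rfl
      have hvCu : v ∈ C u' := by
        rcases ladder_adj_cases hC h' with ⟨h1, _⟩ | ⟨_, h2⟩
        · exact absurd h1 (asymm hvu)
        · exact h2
      have hvsupp : v ∈ ((SimpleGraph.Walk.cons h' Q₁'').append Q₂).support := by
        rw [SimpleGraph.Walk.cons_append, SimpleGraph.Walk.support_cons, List.mem_cons]
        exact Or.inr (SimpleGraph.Walk.start_mem_support _)
      have hsv : s ≠ v := fun h => hs (h ▸ hvsupp)
      have hpath' : (Q₁''.append Q₂).IsPath := by
        rw [SimpleGraph.Walk.cons_append, SimpleGraph.Walk.cons_isPath_iff] at hpath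
        exact hpath.1
      have hs' : s ∉ (Q₁''.append Q₂).support := by
        intro hmem'
        apply hs
        rw [SimpleGraph.Walk.cons_append, SimpleGraph.Walk.support_cons, List.mem_cons]
        exact Or.inr hmem'
      have hc1' : List.Chain' (· > ·) Q₁''.support := by
        rw [SimpleGraph.Walk.support_cons] at hc1
        exact hc1.tail
      rcases cmp_below hwo hlt hvu hsv with hlt2 | hlt2
      · -- s < v : edge s v with s ∈ C v, recurse
        have hsCv : s ∈ C v := htrans u' v hvCu ⟨hmem, hlt2⟩
        have e : (ladderGraph C).Adj s v := ⟨hsv, Or.inl hsCv⟩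
        obtain ⟨m'', R₁, R₂, hp, hsub, hcc1, hcc2⟩ := ih Q₂ hpath' hc1' hc2 e hs'
        refine ⟨m'', R₁, R₂, hp, ?_, hcc1, hcc2⟩
        intro w hw
        rcases hsub w hw with hw | hw
        · exact Or.inl hw
        · right
          rw [SimpleGraph.Walk.cons_append, SimpleGraph.Walk.support_cons, List.mem_cons]
          exact Or.inr hw
      · -- v < s : edge s v with v ∈ C s, shortcut the peak
        have hvCs : v ∈ C s := htrans u' s hmem ⟨hvCu, hlt2⟩
        have e : (ladderGraph C).Adj s v := ⟨hsv, Or.inr hvCs⟩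
        refine ⟨m', SimpleGraph.Walk.cons e Q₁'', Q₂, ?_, ?_, ?_, hc2⟩
        · rw [SimpleGraph.Walk.cons_append, SimpleGraph.Walk.cons_isPath_iff]
          exact ⟨hpath', hs'⟩
        · intro w hw
          rw [SimpleGraph.Walk.cons_append, SimpleGraph.Walk.support_cons,
            List.mem_cons] at hw
          rcases hw with hw | hw
          · exact Or.inl hw
          · right
            rw [SimpleGraph.Walk.cons_append, SimpleGraph.Walk.support_cons,
              List.mem_cons]
            exact Or.inr hw
        · rw [SimpleGraph.Walk.support_cons, List.Chain', List.isChain_cons]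
          refine ⟨?_, hc1'⟩
          intro b hb
          rw [head_support Q₁''] at hb
          cases hb; exact hlt2
    · -- u' < s : prepend edge to Q₁
      refine ⟨m', SimpleGraph.Walk.cons hadj (SimpleGraph.Walk.cons h' Q₁''), Q₂,
        ?_, ?_, ?_, hc2⟩
      · rw [SimpleGraph.Walk.cons_append, SimpleGraph.Walk.cons_isPath_iff]
        exact ⟨hpath, hs⟩
      · intro w hw
        rw [SimpleGraph.Walk.cons_append, SimpleGraph.Walk.support_cons,
          List.mem_cons] at hw
        exact hw
      · rw [SimpleGraph.Walk.support_cons, List.Chain', List.isChain_cons]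
        refine ⟨?_, hc1⟩
        intro b hb
        rw [head_support (SimpleGraph.Walk.cons h' Q₁'')] at hb
        cases hb; exact hlt

end Aux

/-- If `C` is a transitive ladder system on a set-theoretic tree `T` and `P` is a finite
path from `s` to `t` in the graph `X_C`, then there is a path `Q ⊆ P` from `s` to `t`
which is the concatenation of a tree-decreasing path and a tree-increasing path. -/
theorem path_monotone_decomposition {T : Type*} [PartialOrder T]
    (hwo : ∀ t : T, IsWellOrder {s : T // s < t} (· < ·))
    (C : T → Set T)
    (hC : ∀ t : T, C t ⊆ Set.Iio t)
    (htrans : ∀ t : T, ∀ s ∈ C t, C t ∩ Set.Iio s ⊆ C s)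
    (s t : T) (P : (ladderGraph C).Walk s t) (hP : P.IsPath) :
    ∃ (m : T) (Q₁ : (ladderGraph C).Walk s m) (Q₂ : (ladderGraph C).Walk m t),
      (Q₁.append Q₂).IsPath ∧
      (∀ v ∈ (Q₁.append Q₂).support, v ∈ P.support) ∧
      List.Chain' (· > ·) Q₁.support ∧
      List.Chain' (· < ·) Q₂.support := by
  induction P with
  | nil =>
    refine ⟨_, SimpleGraph.Walk.nil, SimpleGraph.Walk.nil, ?_, ?_, ?_, ?_⟩ <;> simp [List.Chain']
  | @cons a u b hadj P' ih =>
    rw [SimpleGraph.Walk.cons_isPath_iff] at hP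
    obtain ⟨m, Q₁, Q₂, hpath, hsub, hc1, hc2⟩ := ih hP.1
    have hs' : a ∉ (Q₁.append Q₂).support := fun h => hP.2 (hsub a h)
    obtain ⟨m', R₁, R₂, hp, hsub', hcc1, hcc2⟩ :=
      lemA hwo hC htrans a b Q₁ Q₂ hpath hc1 hc2 hadj hs'
    refine ⟨m', R₁, R₂, hp, ?_, hcc1, hcc2⟩
    intro v hv
    rw [SimpleGraph.Walk.support_cons, List.mem_cons]
    rcases hsub' v hv with hv | hv
    · exact Or.inl hv
    · exact Or.inr (hsub v hv)
end

section
/- Let T be a set-theoretic tree and C̄ a ladder system on T such that each C_t spans a complete subgraph of the graph X_C̄. If Q = (q_0, …, q_{n}) is a path of minimal length between its endpoints in X_C̄, then there is no index i with 1 ≤ i ≤ n−1 such that both q_{i−1} < q_i and q_{i+1} < q_i in the tree order. -/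
/-- On a path, `getVert` is injective on indices `≤ length`. -/
lemma path_getVert_ne {V : Type*} {G : SimpleGraph V} :
    ∀ {u v : V} (p : G.Walk u v), p.IsPath → ∀ j k : ℕ, j < k → k ≤ p.length →
      p.getVert j ≠ p.getVert k := by
  intro u v p
  induction p with
  | nil => intro _ j k hjk hk; simp only [SimpleGraph.Walk.length_nil] at hk; omega
  | cons h p ih =>
    intro hp j k hjk hk
    rw [SimpleGraph.Walk.cons_isPath_iff] at hp
    rcases j with _ | j
    · intro heq
      apply hp.2
      rw [SimpleGraph.Walk.mem_support_iff_exists_getVert]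
      refine ⟨k - 1, ?_, ?_⟩
      · rw [← SimpleGraph.Walk.getVert_cons p h (by omega)]
        simpa using heq.symm
      · simp only [SimpleGraph.Walk.length_cons] at hk; omega
    · have hk' : k - 1 ≤ p.length := by
        simp only [SimpleGraph.Walk.length_cons] at hk; omega
      have := ih hp.1 j (k - 1) (by omega) hk'
      rw [SimpleGraph.Walk.getVert_cons_succ, SimpleGraph.Walk.getVert_cons p h (by omega)]
      exact this

/-- If two vertices at distance 2 on a walk are adjacent, the walk can be shortened. -/
lemma walk_shortcut {V : Type*} {G : SimpleGraph V} :
    ∀ {u v : V} (Q : G.Walk u v) (j : ℕ), j + 2 ≤ Q.length →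
      G.Adj (Q.getVert j) (Q.getVert (j + 2)) →
      ∃ R : G.Walk u v, R.length + 1 = Q.length := by
  intro u v Q
  induction Q with
  | nil => intro j hj; simp at hj
  | cons h p ih =>
    intro j hj hadj
    rcases j with _ | j
    · cases p with
      | nil => simp at hj
      | cons h' q =>
        simp only [SimpleGraph.Walk.getVert_zero, SimpleGraph.Walk.getVert_cons_succ] at hadj
        exact ⟨SimpleGraph.Walk.cons hadj q, by simp⟩
    · simp only [SimpleGraph.Walk.getVert_cons_succ, SimpleGraph.Walk.length_cons] at *
      obtain ⟨R, hR⟩ := ih j (by omega) hadj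
      exact ⟨SimpleGraph.Walk.cons h R, by simp [hR]⟩

/-- Suppose each `C_t` spans a complete subgraph of `X_C`. If `Q` is a path of minimal
length between its endpoints, then there is no interior index `i` with both
`q_{i-1} < q_i` and `q_{i+1} < q_i` in the tree order. -/
theorem min_path_no_local_max {T : Type*} [PartialOrder T]
    (hwo : ∀ t : T, IsWellOrder {s : T // s < t} (· < ·))
    (C : T → Set T)
    (hC : ∀ t : T, C t ⊆ Set.Iio t)
    (hcomplete : ∀ t : T, ∀ a ∈ C t, ∀ b ∈ C t, a ≠ b → (ladderGraph C).Adj a b)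
    (u v : T) (Q : (ladderGraph C).Walk u v) (hQ : Q.IsPath)
    (hmin : ∀ R : (ladderGraph C).Walk u v, Q.length ≤ R.length) :
    ¬ ∃ i : ℕ, 1 ≤ i ∧ i + 1 ≤ Q.length ∧
      Q.getVert (i - 1) < Q.getVert i ∧ Q.getVert (i + 1) < Q.getVert i := by
  rintro ⟨i, hi1, hi2, hlt1, hlt2⟩
  obtain ⟨j, rfl⟩ : ∃ j, i = j + 1 := ⟨i - 1, by omega⟩
  simp only [Nat.add_sub_cancel] at hlt1
  -- adjacency facts along the walk
  have hadj1 : (ladderGraph C).Adj (Q.getVert j) (Q.getVert (j + 1)) :=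
    Q.adj_getVert_succ (by omega)
  have hadj2 : (ladderGraph C).Adj (Q.getVert (j + 1)) (Q.getVert (j + 2)) :=
    Q.adj_getVert_succ (by omega)
  have hmem1 : Q.getVert j ∈ C (Q.getVert (j + 1)) := by
    rcases hadj1.2 with h | h
    · exact h
    · exact absurd (hC _ h) (by simp; exact not_lt_of_gt hlt1)
  have hmem2 : Q.getVert (j + 2) ∈ C (Q.getVert (j + 1)) := by
    rcases hadj2.2 with h | h
    · exact absurd (hC _ h) (by simp; exact not_lt_of_gt hlt2)
    · exact h
  have hne : Q.getVert j ≠ Q.getVert (j + 2) :=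
    path_getVert_ne Q hQ j (j + 2) (by omega) (by omega)
  have hadj := hcomplete _ _ hmem1 _ hmem2 hne
  obtain ⟨R, hR⟩ := walk_shortcut Q j (by omega) hadj
  have := hmin R
  omega
end

section
/- Let T be a tree and X a subgraph of the comparability graph G(T) such that X contains no special cycles (cycles that are unions of two tree-monotone paths). Then X contains no triangles and no subgraph isomorphic to H_{ω,ω+2}. -/
open SimpleGraph

/-- Adjacency generator for the graph `H_{ω,ω+2}` on vertices
`x_i` (`Sum.inl i`), `y_j` (`Sum.inr (Sum.inl j)`) and `z, z'`
(`Sum.inr (Sum.inr false/true)`). -/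
def Hrel : ℕ ⊕ (ℕ ⊕ Bool) → ℕ ⊕ (ℕ ⊕ Bool) → Prop
  | Sum.inl i, Sum.inr (Sum.inl j) => i ≤ j
  | Sum.inl _, Sum.inr (Sum.inr _) => True
  | _, _ => False

/-- The graph `H_{ω,ω+2}`: edges `{x_i, y_j}` for `i ≤ j` and `{x_i, z}`, `{x_i, z'}`. -/
def Hgraph : SimpleGraph (ℕ ⊕ (ℕ ⊕ Bool)) where
  Adj u v := Hrel u v ∨ Hrel v u
  symm := ⟨by intro u v h; tauto⟩
  loopless := ⟨by rintro (i | j | b) (h | h) <;> exact h.elim⟩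

lemma cycle3' {V} {G : SimpleGraph V} {a b c : V}
    (hab : G.Adj a b) (hbc : G.Adj b c) (hca : G.Adj c a) :
    (Walk.cons hab (Walk.cons hbc (Walk.cons hca Walk.nil))).IsCycle := by
  have h1 := hab.ne; have h2 := hbc.ne; have h3 := hca.ne
  simp [Walk.isCycle_def, Walk.isTrail_def, Sym2.eq_iff]
  aesop

lemma cycle4' {V} {G : SimpleGraph V} {a b c d : V}
    (hab : G.Adj a b) (hbc : G.Adj b c) (hcd : G.Adj c d) (hda : G.Adj d a)
    (hac : a ≠ c) (hbd : b ≠ d) :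
    (Walk.cons hab (Walk.cons hbc (Walk.cons hcd (Walk.cons hda Walk.nil)))).IsCycle := by
  have h1 := hab.ne; have h2 := hbc.ne; have h3 := hcd.ne; have h4 := hda.ne
  simp [Walk.isCycle_def, Walk.isTrail_def, Sym2.eq_iff]
  aesop

/-- If a subgraph `X` of the comparability graph of a set-theoretic tree contains no
special cycle (a cycle which is the union of two tree-monotone paths), then `X`
contains no triangle and no subgraph isomorphic to `H_{ω,ω+2}`. -/
theorem no_special_cycles_consequences {T : Type*} [PartialOrder T]
    (hwo : ∀ t : T, IsWellOrder {s : T // s < t} (· < ·))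
    (X : SimpleGraph T) (hX : X ≤ compGraph T)
    (hns : ∀ (x m : T) (p₁ : X.Walk x m) (p₂ : X.Walk m x),
      (p₁.append p₂).IsCycle →
      IsChain (· ≤ ·) {v : T | v ∈ p₁.support} →
      IsChain (· ≤ ·) {v : T | v ∈ p₂.support} → False) :
    (¬ ∃ a b c : T, X.Adj a b ∧ X.Adj b c ∧ X.Adj a c) ∧
    (¬ ∃ f : ℕ ⊕ (ℕ ⊕ Bool) → T, Function.Injective f ∧
      ∀ u v, Hgraph.Adj u v → X.Adj (f u) (f v)) := by
  have comp : ∀ {u v : T}, X.Adj u v → u ≤ v ∨ v ≤ u := by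
    intro u v h
    rcases hX h with h' | h'
    · exact Or.inl h'.le
    · exact Or.inr h'.le
  have tri : ∀ {p q t : T}, p < t → q < t → p ≤ q ∨ q ≤ p := by
    intro p q t hp hq
    have := (hwo t).toTrichotomous
    rcases @trichotomous _ _ this ⟨p, hp⟩ ⟨q, hq⟩ with h | h | h
    · exact Or.inl (le_of_lt (Subtype.mk_lt_mk.mp h))
    · exact Or.inl (le_of_eq (congrArg Subtype.val h))
    · exact Or.inr (le_of_lt (Subtype.mk_lt_mk.mp h))
  have quad : ∀ {a b c d : T}, X.Adj a b → X.Adj b c → X.Adj c d → X.Adj d a →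
      a ≠ c → b ≠ d → (a ≤ c ∨ c ≤ a) → False := by
    intro a b c d hab hbc hcd hda hac hbd hcomp
    refine hns a c (Walk.cons hab (Walk.cons hbc Walk.nil))
      (Walk.cons hcd (Walk.cons hda Walk.nil)) (cycle4' hab hbc hcd hda hac hbd) ?_ ?_
    · intro u hu v hv hne
      simp only [Set.mem_setOf_eq, Walk.support_cons, Walk.support_nil,
        List.mem_cons, List.mem_singleton, List.not_mem_nil, or_false] at hu hv
      have h1 := comp hab; have h2 := comp hbc
      rcases hu with rfl | rfl | rfl <;> rcases hv with rfl | rfl | rfl <;>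
        first | exact absurd rfl hne | tauto
    · intro u hu v hv hne
      simp only [Set.mem_setOf_eq, Walk.support_cons, Walk.support_nil,
        List.mem_cons, List.mem_singleton, List.not_mem_nil, or_false] at hu hv
      have h1 := comp hcd; have h2 := comp hda
      rcases hu with rfl | rfl | rfl <;> rcases hv with rfl | rfl | rfl <;>
        first | exact absurd rfl hne | tauto
  constructor
  · rintro ⟨a, b, c, hab, hbc, hac⟩
    refine hns a b (Walk.cons hab Walk.nil)
      (Walk.cons hbc (Walk.cons hac.symm Walk.nil)) (cycle3' hab hbc hac.symm) ?_ ?_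
    · intro u hu v hv hne
      simp only [Set.mem_setOf_eq, Walk.support_cons, Walk.support_nil,
        List.mem_cons, List.mem_singleton, List.not_mem_nil, or_false] at hu hv
      have h1 := comp hab
      rcases hu with rfl | rfl <;> rcases hv with rfl | rfl <;>
        first | exact absurd rfl hne | tauto
    · intro u hu v hv hne
      simp only [Set.mem_setOf_eq, Walk.support_cons, Walk.support_nil,
        List.mem_cons, List.mem_singleton, List.not_mem_nil, or_false] at hu hv
      have h1 := comp hbc; have h2 := comp hac; have h3 := comp hab
      rcases hu with rfl | rfl | rfl <;> rcases hv with rfl | rfl | rfl <;>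
        first | exact absurd rfl hne | tauto
  · rintro ⟨f, hf, hadj⟩
    set z : T := f (Sum.inr (Sum.inr false)) with hz
    set z' : T := f (Sum.inr (Sum.inr true)) with hz'
    set x : ℕ → T := fun i => f (Sum.inl i) with hxdef
    have hxz : ∀ i, X.Adj (x i) z := fun i => hadj _ _ (Or.inl (by trivial))
    have hxz' : ∀ i, X.Adj (x i) z' := fun i => hadj _ _ (Or.inl (by trivial))
    have hzz' : z ≠ z' := fun h => by simpa using hf h
    have hxne : ∀ i j : ℕ, i ≠ j → x i ≠ x j := fun i j hij h => hij (by simpa using hf h)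
    by_cases hcmp : ∃ i j : ℕ, i ≠ j ∧ (x i ≤ x j ∨ x j ≤ x i)
    · rcases hcmp with ⟨i, j, hij, hc⟩
      exact quad (hxz i) (hxz j).symm (hxz' j) (hxz' i).symm (hxne i j hij) hzz' hc
    · push_neg at hcmp
      have key : ∀ (w : T), (∀ i, X.Adj (x i) w) → ∃ i₀ : ℕ, ∀ j, j ≠ i₀ → w < x j := by
        intro w hw
        by_cases h : ∃ i, x i < w
        · rcases h with ⟨i, hi⟩
          refine ⟨i, fun j hj => ?_⟩
          rcases hX (hw j) with h' | h'
          · rcases tri h' hi with hle | hle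
            · exact absurd hle (hcmp j i hj).1
            · exact absurd hle (hcmp j i hj).2
          · exact h'
        · push_neg at h
          refine ⟨0, fun j _ => ?_⟩
          rcases hX (hw j) with h' | h'
          · exact absurd h' (h j)
          · exact h'
      rcases key z hxz with ⟨i₀, hi₀⟩
      rcases key z' hxz' with ⟨i₁, hi₁⟩
      set k : ℕ := max i₀ i₁ + 1 with hk
      set l : ℕ := max i₀ i₁ + 2 with hl
      have hz1 : z < x k := hi₀ k (by omega)
      have hz2 : z' < x k := hi₁ k (by omega)
      have hz3 : z' < x l := hi₁ l (by omega)
      have hz4 : z < x l := hi₀ l (by omega)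
      exact quad (hxz k).symm (hxz' k) (hxz' l).symm (hxz l) hzz'
        (hxne k l (by omega)) (tri hz1 hz2)
end

section
/- Let S ⊆ ω₁ be stationary, T = T(S), X a subgraph of G(T), and f : T → ω a colouring. Then there exist δ < ω₁ and t ∈ T with max(t) = δ such that for every n ∈ ω, either (1) for every r ≥ t and every γ < ω₁ there is s ≥ r with f(s) = n which is not γ-covered in X, or (2) every r ≥ t with f(r) = n is δ-covered in X. -/
open Ordinal

/-- A set of ordinals is sup-closed if it contains the supremum of each of its
nonempty subsets; for a set of ordinals this means it is closed and has a maximum. -/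
def SupClosed' (t : Set Ordinal) : Prop :=
  ∀ u : Set Ordinal, u ⊆ t → u.Nonempty → sSup u ∈ t

/-- The tree `T(S)`: nonempty closed bounded subsets of `S`, ordered by
end-extension. -/
@[ext]
structure TS (S : Set Ordinal) where
  carrier : Set Ordinal
  nonempty' : carrier.Nonempty
  subset' : carrier ⊆ S
  closed' : SupClosed' carrier

/-- `s ≤ t` iff `s` is an initial segment of `t`. -/
instance TS.instPartialOrder (S : Set Ordinal) : PartialOrder (TS S) where
  le s t := s.carrier ⊆ t.carrier ∧
    ∀ a ∈ s.carrier, ∀ b ∈ t.carrier, b ≤ a → b ∈ s.carrier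
  le_refl s := ⟨subset_rfl, fun _ _ b hb _ => hb⟩
  le_trans s t u h1 h2 := ⟨h1.1.trans h2.1, fun a ha b hb hba =>
    h1.2 a ha b (h2.2 a (h1.1 ha) b hb hba) hba⟩
  le_antisymm s t h1 h2 := TS.ext (subset_antisymm h1.1 h2.1)

/-- `S` is a stationary subset of `ω₁`: it meets every club of `ω₁`. -/
def IsStationary' (S : Set Ordinal) : Prop :=
  S ⊆ Set.Iio ω₁ ∧
  ∀ C : Set Ordinal, C ⊆ Set.Iio ω₁ → (∀ a < ω₁, ∃ b ∈ C, a ≤ b) →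
    (∀ u : Set Ordinal, u ⊆ C → u.Nonempty → sSup u < ω₁ → sSup u ∈ C) →
    (S ∩ C).Nonempty

/-- `v` is `γ`-covered in a graph `X` on `T(S)`: there is a vertex `w` with
`max w ≤ γ` and a tree-monotone path in `X` from `w` to `v`. -/
def Covered {S : Set Ordinal} (X : SimpleGraph (TS S)) (γ : Ordinal) (v : TS S) :
    Prop :=
  ∃ w : TS S, sSup w.carrier ≤ γ ∧
    ∃ p : X.Walk w v, IsChain (· ≤ ·) {x : TS S | x ∈ p.support}


section PRELUDE

lemma csSup_lt_omega1 {s : Set Ordinal} (hc : s.Countable) (hs : ∀ x ∈ s, x < ω₁) :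
    sSup s < ω₁ := by
  rcases s.eq_empty_or_nonempty with rfl | hne
  · rw [csSup_empty]; exact omega_pos 1
  · obtain ⟨g, hg⟩ := hc.exists_eq_range hne
    subst hg
    have := Ordinal.iSup_lt_omega_one (f := g) fun n => by
      exact hs _ ⟨n, rfl⟩
    rwa [← sSup_range] at this

lemma countable_Iio_omega1 {o : Ordinal} (h : o < ω₁) : (Set.Iio o).Countable := by
  rw [Cardinal.countable_iff_lt_aleph_one, Ordinal.mk_Iio_ordinal, Cardinal.lift_lt_aleph_one,
    ← Cardinal.lt_ord, Cardinal.ord_aleph]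
  exact h

lemma succ_lt_omega1 {o : Ordinal} (h : o < ω₁) : o + 1 < ω₁ := by
  have := (Cardinal.isSuccLimit_omega 1).succ_lt h
  rwa [Ordinal.add_one_eq_succ]

lemma countable_Iic_omega1 {o : Ordinal} (h : o < ω₁) : (Set.Iic o).Countable := by
  have h2 : Set.Iic o ⊆ Set.Iio (o + 1) := by
    intro x hx
    have : o < o + 1 := by rw [Ordinal.add_one_eq_succ]; exact Order.lt_succ o
    exact lt_of_le_of_lt hx this
  exact (countable_Iio_omega1 (succ_lt_omega1 h)).mono h2

end PRELUDE

namespace DecisionAux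

open scoped Classical

variable {S : Set Ordinal}

lemma le_def (s t : TS S) :
    s ≤ t ↔ (s.carrier ⊆ t.carrier ∧
      ∀ a ∈ s.carrier, ∀ b ∈ t.carrier, b ≤ a → b ∈ s.carrier) := Iff.rfl

lemma bddCarrier (hS : IsStationary' S) (t : TS S) : BddAbove t.carrier :=
  ⟨ω₁, fun _ hx => (hS.1 (t.subset' hx)).le⟩

/-- max of a node. -/
noncomputable def top (t : TS S) : Ordinal := sSup t.carrier

lemma top_mem (t : TS S) : top t ∈ t.carrier :=
  t.closed' _ subset_rfl t.nonempty'

lemma top_lt (hS : IsStationary' S) (t : TS S) : top t < ω₁ :=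
  hS.1 (t.subset' (top_mem t))

lemma le_top (hS : IsStationary' S) (t : TS S) {x : Ordinal} (hx : x ∈ t.carrier) :
    x ≤ top t := le_csSup (bddCarrier hS t) hx

lemma top_mono (hS : IsStationary' S) {s t : TS S} (h : s ≤ t) : top s ≤ top t :=
  csSup_le_csSup (bddCarrier hS t) s.nonempty' h.1

lemma S_nonempty (hS : IsStationary' S) : S.Nonempty := by
  obtain ⟨b, hb, -⟩ := hS.2 (Set.Iio ω₁) subset_rfl
    (fun a ha => ⟨a, ha, le_rfl⟩)
    (fun u hu hne hlt => hlt)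
  exact ⟨b, hb⟩

lemma S_unbounded (hS : IsStationary' S) {a : Ordinal} (ha : a < ω₁) :
    ∃ b ∈ S, a < b := by
  obtain ⟨b, hbS, hb1, -⟩ := hS.2 {x | a + 1 ≤ x ∧ x < ω₁}
    (fun x hx => hx.2)
    (fun c hc => ⟨max (a+1) c, ⟨le_max_left _ _, max_lt (succ_lt_omega1 ha) hc⟩, le_max_right _ _⟩)
    (fun u hu hne hlt => ⟨le_trans (hu hne.some_mem).1 (le_csSup ⟨ω₁, fun x hx => ((hu hx).2).le⟩ hne.some_mem), hlt⟩)
  exact ⟨b, hbS, lt_of_lt_of_le (by rw [Ordinal.add_one_eq_succ]; exact Order.lt_succ a) hb1⟩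

/-- choice of an element of `S` above `a`. -/
noncomputable def nxt (hS : IsStationary' S) (a : Ordinal) : Ordinal :=
  if h : ∃ b ∈ S, a < b then h.choose else (S_nonempty hS).choose

lemma nxt_mem (hS : IsStationary' S) (a : Ordinal) : nxt hS a ∈ S := by
  unfold nxt; split
  · next h => exact h.choose_spec.1
  · exact (S_nonempty hS).choose_spec

lemma nxt_gt (hS : IsStationary' S) {a : Ordinal} (ha : a < ω₁) : a < nxt hS a := by
  have h : ∃ b ∈ S, a < b := S_unbounded hS ha
  rw [nxt, dif_pos h]
  exact h.choose_spec.2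

/-- extend a node by one point of `S` above `a` and above its max. -/
noncomputable def ext (hS : IsStationary' S) (t : TS S) (a : Ordinal) : TS S :=
  if h : max (top t) a < ω₁ then
    { carrier := insert (nxt hS (max (top t) a)) t.carrier
      nonempty' := ⟨_, Set.mem_insert _ _⟩
      subset' := by
        intro x hx
        rcases hx with rfl | hx
        · exact nxt_mem hS _
        · exact t.subset' hx
      closed' := by
        intro u hu hne
        set b := nxt hS (max (top t) a) with hb
        have hbgt : top t < b := lt_of_le_of_lt (le_max_left _ _) (nxt_gt hS h)
        by_cases hbu : b ∈ u
        · have : sSup u = b := le_antisymm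
            (csSup_le hne (fun x hx => by
              rcases hu hx with rfl | hx'
              · exact le_rfl
              · exact le_of_lt (lt_of_le_of_lt (le_top hS t hx') hbgt)))
            (le_csSup ⟨b, fun x hx => by
              rcases hu hx with rfl | hx'
              · exact le_rfl
              · exact le_of_lt (lt_of_le_of_lt (le_top hS t hx') hbgt)⟩ hbu)
          rw [this]; exact Set.mem_insert _ _
        · have hsub : u ⊆ t.carrier := by
            intro x hx
            rcases hu hx with rfl | hx'
            · exact absurd hx hbu
            · exact hx'
          exact Set.mem_insert_of_mem _ (t.closed' u hsub hne) }
  else t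

lemma ext_le (hS : IsStationary' S) (t : TS S) (a : Ordinal) : t ≤ ext hS t a := by
  rw [ext]; split
  · next h =>
    refine ⟨Set.subset_insert _ _, ?_⟩
    intro x hx y hy hyx
    rcases hy with rfl | hy'
    · exact absurd (le_trans hyx (le_top hS t hx))
        (not_le.2 (lt_of_le_of_lt (le_max_left _ _) (nxt_gt hS h)))
    · exact hy'
  · exact le_rfl

lemma lt_top_ext (hS : IsStationary' S) (t : TS S) {a : Ordinal} (ha : a < ω₁) :
    a < top (ext hS t a) := by
  have h : max (top t) a < ω₁ := max_lt (top_lt hS t) ha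
  have hmem : nxt hS (max (top t) a) ∈ (ext hS t a).carrier := by
    rw [ext, dif_pos h]; exact Set.mem_insert _ _
  exact lt_of_le_of_lt (le_max_right (top t) a)
    (lt_of_lt_of_le (nxt_gt hS h) (le_top hS _ hmem))

variable (X : SimpleGraph (TS S)) (f : TS S → ℕ)

/-- "case A" predicate: above `t` there is a witness `r` such that all of its
extensions of colour `n` are `γ`-covered. -/
def Pp (t : TS S) (n : ℕ) : Prop :=
  ∃ r : TS S, t ≤ r ∧ ∃ γ, γ < ω₁ ∧ ∀ s, r ≤ s → f s = n → Covered X γ s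

noncomputable def Rw (t : TS S) (n : ℕ) : TS S :=
  if h : Pp X f t n then h.choose else t

noncomputable def Gw (t : TS S) (n : ℕ) : Ordinal :=
  if h : Pp X f t n then h.choose_spec.2.choose else 0

lemma le_Rw (t : TS S) (n : ℕ) : t ≤ Rw X f t n := by
  rw [Rw]; split
  · next h => exact h.choose_spec.1
  · exact le_rfl

lemma Gw_lt (t : TS S) (n : ℕ) : Gw X f t n < ω₁ := by
  rw [Gw]; split
  · next h => exact h.choose_spec.2.choose_spec.1
  · exact omega_pos 1

lemma Rw_covers (t : TS S) (n : ℕ) (h : Pp X f t n) :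
    ∀ s, Rw X f t n ≤ s → f s = n → Covered X (Gw X f t n) s := by
  rw [Rw, dif_pos h, Gw, dif_pos h]
  exact h.choose_spec.2.choose_spec.2

/-- One step of the recursion. -/
noncomputable def step (hS : IsStationary' S) (t : TS S) (n : ℕ) : TS S :=
  ext hS (Rw X f t n) (Gw X f t n)

lemma le_step (hS : IsStationary' S) (t : TS S) (n : ℕ) : t ≤ step X f hS t n :=
  le_trans (le_Rw X f t n) (ext_le hS _ _)

lemma Rw_le_step (hS : IsStationary' S) (t : TS S) (n : ℕ) : Rw X f t n ≤ step X f hS t n :=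
  ext_le hS _ _

lemma Gw_lt_top_step (hS : IsStationary' S) (t : TS S) (n : ℕ) :
    Gw X f t n < top (step X f hS t n) :=
  lt_top_ext hS _ (Gw_lt X f t n)

/-- all nodes reachable from the base by the operations, coded by lists. -/
noncomputable def build (hS : IsStationary' S) : List (Ordinal ⊕ ℕ) → TS S
  | [] => ⟨{nxt hS 0}, ⟨_, rfl⟩, by
      intro x hx; rw [Set.mem_singleton_iff] at hx; rw [hx]; exact nxt_mem hS 0, by
      intro u hu hne
      have : u = {nxt hS 0} := Set.Subset.antisymm hu (by
        intro x hx; rw [Set.mem_singleton_iff] at hx; subst hx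
        obtain ⟨y, hy⟩ := hne; have := hu hy; rw [Set.mem_singleton_iff] at this
        rwa [← this])
      rw [this, csSup_singleton]; rfl⟩
  | (Sum.inl a) :: l => ext hS (build hS l) a
  | (Sum.inr n) :: l => step X f hS (build hS l) n

lemma build_inl (hS : IsStationary' S) (a : Ordinal) (l : List (Ordinal ⊕ ℕ)) :
    build X f hS (Sum.inl a :: l) = ext hS (build X f hS l) a := rfl

lemma build_inr (hS : IsStationary' S) (n : ℕ) (l : List (Ordinal ⊕ ℕ)) :
    build X f hS (Sum.inr n :: l) = step X f hS (build X f hS l) n := rfl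

/-- bound for builds with parameters `≤ β`. -/
noncomputable def hfun (hS : IsStationary' S) (β : Ordinal) : Ordinal :=
  sSup ((fun l => top (build X f hS l) + 1) ''
    {l : List (Ordinal ⊕ ℕ) | ∀ x, Sum.inl x ∈ l → x ≤ β})

lemma listset_countable {β : Ordinal} (hβ : β < ω₁) :
    ({l : List (Ordinal ⊕ ℕ) | ∀ x, Sum.inl x ∈ l → x ≤ β}).Countable := by
  set E : Set (Ordinal ⊕ ℕ) := (Sum.inl '' Set.Iic β) ∪ Set.range Sum.inr with hE
  have hEc : E.Countable :=
    ((countable_Iic_omega1 hβ).image _).union (Set.countable_range _)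
  have : Countable ↥E := hEc.to_subtype
  have hsub : {l : List (Ordinal ⊕ ℕ) | ∀ x, Sum.inl x ∈ l → x ≤ β} ⊆
      Set.range (fun l : List ↥E => l.map Subtype.val) := by
    intro l hl
    have hmem : ∀ x ∈ l, x ∈ E := by
      intro x hx
      rcases x with a | n
      · exact Or.inl ⟨a, hl a hx, rfl⟩
      · exact Or.inr ⟨n, rfl⟩
    refine ⟨l.attach.map (fun x => ⟨x.1, hmem x.1 x.2⟩), ?_⟩
    dsimp only
    rw [List.map_map]
    exact List.attach_map_subtype_val l
  exact (Set.countable_range _).mono hsub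

lemma hfun_lt (hS : IsStationary' S) {β : Ordinal} (hβ : β < ω₁) :
    hfun X f hS β < ω₁ := by
  apply csSup_lt_omega1 ((listset_countable hβ).image _)
  rintro x ⟨l, -, rfl⟩
  exact succ_lt_omega1 (top_lt hS _)

lemma build_top_lt (hS : IsStationary' S) {β : Ordinal} {l : List (Ordinal ⊕ ℕ)}
    (hl : ∀ x, Sum.inl x ∈ l → x ≤ β) :
    top (build X f hS l) + 1 ≤ hfun X f hS β := by
  apply le_csSup
  · exact ⟨ω₁, by rintro x ⟨m, -, rfl⟩; exact (succ_lt_omega1 (top_lt hS _)).le⟩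
  · exact ⟨l, hl, rfl⟩

end DecisionAux

/-- Decision lemma: for stationary `S ⊆ ω₁`, a subgraph `X` of `G(T(S))` and a
colouring `f : T(S) → ω`, there are `δ < ω₁` and `t` with `max t = δ` deciding `f`:
for every `n`, either every `r ≥ t` has extensions of colour `n` avoiding being
`γ`-covered for each `γ < ω₁`, or every `r ≥ t` of colour `n` is `δ`-covered. -/
theorem decision_lemma {S : Set Ordinal} (hS : IsStationary' S)
    (X : SimpleGraph (TS S)) (hX : X ≤ compGraph (TS S))
    (f : TS S → ℕ) :
    ∃ δ : Ordinal, δ < ω₁ ∧ ∃ t : TS S, sSup t.carrier = δ ∧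
      ∀ n : ℕ,
        (∀ r : TS S, t ≤ r → ∀ γ < ω₁, ∃ s : TS S, r ≤ s ∧ f s = n ∧
          ¬ Covered X γ s) ∨
        (∀ r : TS S, t ≤ r → f r = n → Covered X δ r) := by
  classical
  open DecisionAux in
  set H : Ordinal → Ordinal := DecisionAux.hfun X f hS with hH
  set C : Set Ordinal := {β | β < ω₁ ∧ 0 < β ∧ ∀ ξ < β, H ξ ≤ β} with hC
  have hCsub : C ⊆ Set.Iio ω₁ := fun β hβ => hβ.1
  have hCunb : ∀ a, a < ω₁ → ∃ b ∈ C, a ≤ b := by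
    intro a ha
    set g : ℕ → Ordinal :=
      fun k => Nat.rec (a + 1) (fun _ b => max (b + 1) (sSup (H '' Set.Iic b))) k with hg
    have hgs : ∀ k, g (k+1) = max (g k + 1) (sSup (H '' Set.Iic (g k))) := fun k => rfl
    have hglt : ∀ k, g k < ω₁ := by
      intro k; induction k with
      | zero => exact succ_lt_omega1 ha
      | succ k ih =>
        rw [hgs]
        apply max_lt (succ_lt_omega1 ih)
        apply csSup_lt_omega1 ((countable_Iic_omega1 ih).image _)
        rintro x ⟨ξ, hξ, rfl⟩
        exact DecisionAux.hfun_lt X f hS (lt_of_le_of_lt hξ ih)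
    have hbddg : BddAbove (Set.range g) := ⟨ω₁, by rintro x ⟨k, rfl⟩; exact (hglt k).le⟩
    have hgmem : ∀ k, g k ≤ sSup (Set.range g) := fun k => le_csSup hbddg ⟨k, rfl⟩
    have hlt1 : ∀ k, g k < g (k+1) := by
      intro k; rw [hgs]
      exact lt_of_lt_of_le (by rw [Ordinal.add_one_eq_succ]; exact Order.lt_succ _)
        (le_max_left _ _)
    refine ⟨sSup (Set.range g), ⟨?_, ?_, ?_⟩, ?_⟩
    · exact csSup_lt_omega1 (Set.countable_range g) (by rintro x ⟨k, rfl⟩; exact hglt k)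
    · have h00 : a < a + 1 := by
        rw [Ordinal.add_one_eq_succ]; exact Order.lt_succ a
      have h01 : (0 : Ordinal) < g 0 := lt_of_le_of_lt (zero_le (a := a)) h00
      exact lt_of_lt_of_le h01 (hgmem 0)
    · intro ξ hξ
      obtain ⟨x, ⟨k, rfl⟩, hξk⟩ := exists_lt_of_lt_csSup (Set.range_nonempty g) hξ
      have h1 : H ξ ≤ sSup (H '' Set.Iic (g k)) := by
        apply le_csSup
        · refine ⟨ω₁, ?_⟩
          rintro x ⟨ζ, hζ, rfl⟩
          exact (DecisionAux.hfun_lt X f hS (lt_of_le_of_lt hζ (hglt k))).le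
        · exact ⟨ξ, hξk.le, rfl⟩
      exact h1.trans ((le_max_right _ _).trans ((hgs k ▸ hgmem (k+1)) ))
    · exact (le_self_add (a := a) (b := 1)).trans (hgmem 0)
  have hCcl : ∀ u : Set Ordinal, u ⊆ C → u.Nonempty → sSup u < ω₁ → sSup u ∈ C := by
    intro u hu hne hlt
    have hbdd : BddAbove u := ⟨ω₁, fun x hx => (hu hx).1.le⟩
    refine ⟨hlt, ?_, ?_⟩
    · obtain ⟨β, hβ⟩ := hne
      exact lt_of_lt_of_le (hu hβ).2.1 (le_csSup hbdd hβ)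
    · intro ξ hξ
      obtain ⟨β, hβu, hξβ⟩ := exists_lt_of_lt_csSup hne hξ
      exact le_trans ((hu hβu).2.2 ξ hξβ) (le_csSup hbdd hβu)
  obtain ⟨δ, hδS, hδC⟩ := hS.2 C hCsub hCunb hCcl
  have hδω : δ < ω₁ := hδC.1
  have hδ0 : (0 : Ordinal) < δ := hδC.2.1
  have hδH : ∀ ξ < δ, H ξ ≤ δ := hδC.2.2
  obtain ⟨e, he⟩ := (countable_Iio_omega1 hδω).exists_eq_range ⟨0, hδ0⟩
  have helt : ∀ k, e k < δ := by
    intro k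
    have : e k ∈ Set.Iio δ := he ▸ Set.mem_range_self k
    exact this
  have hesurj : ∀ x, x < δ → ∃ k, e k = x := by
    intro x hx
    have : x ∈ Set.range e := he ▸ hx
    exact this
  set L : ℕ → List (Ordinal ⊕ ℕ) :=
    fun k => Nat.rec [] (fun k l => Sum.inl (e k) :: Sum.inr k :: l) k with hLdef
  have hLs : ∀ k, L (k+1) = Sum.inl (e k) :: Sum.inr k :: L k := fun k => rfl
  set tn : ℕ → TS S := fun k => DecisionAux.build X f hS (L k) with htn
  have htns : ∀ k, tn (k+1) =
      DecisionAux.ext hS (DecisionAux.step X f hS (tn k) k) (e k) := by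
    intro k
    show DecisionAux.build X f hS (L (k+1)) =
      DecisionAux.ext hS (DecisionAux.step X f hS (DecisionAux.build X f hS (L k)) k) (e k)
    rw [hLs, DecisionAux.build_inl, DecisionAux.build_inr]
  have htoplt : ∀ k, DecisionAux.top (tn k) < δ := by
    intro k
    have hbound : ∃ m, m < δ ∧ ∀ x, Sum.inl x ∈ L k → x ≤ m := by
      induction k with
      | zero => exact ⟨0, hδ0, by intro x hx; simp [hLdef] at hx⟩
      | succ k ih =>
        obtain ⟨m, hm, hmb⟩ := ih
        refine ⟨max m (e k), max_lt hm (helt k), ?_⟩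
        intro x hx
        rw [hLs] at hx
        rcases List.mem_cons.1 hx with h1 | h2
        · rw [Sum.inl.injEq] at h1
          exact h1 ▸ le_max_right _ _
        · rcases List.mem_cons.1 h2 with h3 | h4
          · exact absurd h3 (by simp)
          · exact (hmb x h4).trans (le_max_left _ _)
    obtain ⟨m, hm, hmb⟩ := hbound
    have h1 : DecisionAux.top (tn k) + 1 ≤ H m := DecisionAux.build_top_lt X f hS hmb
    have h2 : DecisionAux.top (tn k) < DecisionAux.top (tn k) + 1 := by
      rw [Ordinal.add_one_eq_succ]; exact Order.lt_succ _
    exact lt_of_lt_of_le h2 (h1.trans (hδH m hm))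
  have hmono : Monotone tn := by
    apply monotone_nat_of_le_succ
    intro k
    rw [htns]
    exact (DecisionAux.le_step X f hS (tn k) k).trans (DecisionAux.ext_le hS _ _)
  have hetop : ∀ k, e k < DecisionAux.top (tn (k+1)) := by
    intro k
    rw [htns]
    exact DecisionAux.lt_top_ext hS _ (lt_trans (helt k) hδω)
  have hdown : ∀ j k x, x ∈ (tn j).carrier → x ≤ DecisionAux.top (tn k) →
      x ∈ (tn k).carrier := by
    intro j k x hx hxle
    rcases le_total j k with h | h
    · exact (hmono h).1 hx
    · exact (hmono h).2 _ (DecisionAux.top_mem (tn k)) x hx hxle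
  set A : Set Ordinal := (⋃ k, (tn k).carrier) ∪ {δ} with hA
  have hAle : ∀ x ∈ A, x ≤ δ := by
    rintro x (hx | hx)
    · obtain ⟨k, hk⟩ := Set.mem_iUnion.1 hx
      exact (DecisionAux.le_top hS _ hk).trans (htoplt k).le
    · rw [Set.mem_singleton_iff] at hx
      exact hx.le
  have hδA : δ ∈ A := Or.inr rfl
  set t : TS S := ⟨A, ⟨δ, hδA⟩, by
    rintro x (hx | hx)
    · obtain ⟨k, hk⟩ := Set.mem_iUnion.1 hx
      exact (tn k).subset' hk
    · rw [Set.mem_singleton_iff] at hx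
      exact hx ▸ hδS, by
    intro u hu hne
    have hbdd : BddAbove u := ⟨δ, fun x hx => hAle x (hu hx)⟩
    have hle : sSup u ≤ δ := csSup_le hne (fun x hx => hAle x (hu hx))
    rcases eq_or_lt_of_le hle with heq | hlt
    · rw [heq]; exact hδA
    · obtain ⟨k, hk⟩ := hesurj (sSup u) hlt
      have husub : u ⊆ (tn (k+1)).carrier := by
        intro x hx
        have hxle : x ≤ sSup u := le_csSup hbdd hx
        rcases hu hx with hx' | hx''
        · obtain ⟨j, hj⟩ := Set.mem_iUnion.1 hx'
          exact hdown j (k+1) x hj (hxle.trans (hk ▸ (hetop k)).le)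
        · rw [Set.mem_singleton_iff] at hx''
          exact absurd (lt_of_le_of_lt hxle hlt) (not_lt.2 (le_of_eq hx''.symm))
      exact Or.inl (Set.mem_iUnion.2 ⟨k+1, (tn (k+1)).closed' u husub hne⟩)⟩
    with ht
  have htopt : sSup t.carrier = δ := by
    apply le_antisymm
    · exact csSup_le ⟨δ, hδA⟩ hAle
    · exact le_csSup ⟨δ, fun x hx => hAle x hx⟩ hδA
  have htn_le_t : ∀ k, tn k ≤ t := by
    intro k
    refine ⟨fun x hx => Or.inl (Set.mem_iUnion.2 ⟨k, hx⟩), ?_⟩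
    intro a ha b hb hba
    have hale : a ≤ DecisionAux.top (tn k) := DecisionAux.le_top hS _ ha
    rcases hb with hb1 | hb2
    · obtain ⟨j, hj⟩ := Set.mem_iUnion.1 hb1
      exact hdown j k b hj (hba.trans hale)
    · rw [Set.mem_singleton_iff] at hb2
      exact absurd (lt_of_le_of_lt (hba.trans hale) (htoplt k))
        (not_lt.2 (le_of_eq hb2.symm))
  refine ⟨δ, hδω, t, htopt, ?_⟩
  intro n
  by_cases hP : DecisionAux.Pp X f (tn n) n
  · right
    intro r hr hfr
    have hstep_le : DecisionAux.step X f hS (tn n) n ≤ tn (n+1) := by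
      rw [htns]
      exact DecisionAux.ext_le hS _ _
    have hr1 : DecisionAux.Rw X f (tn n) n ≤ r :=
      ((DecisionAux.Rw_le_step X f hS (tn n) n).trans
        (hstep_le.trans ((htn_le_t (n+1)).trans hr)))
    have hγδ : DecisionAux.Gw X f (tn n) n ≤ δ := by
      have h1 := DecisionAux.Gw_lt_top_step X f hS (tn n) n
      have h2 := DecisionAux.top_mono hS hstep_le
      exact (lt_of_lt_of_le h1 (h2.trans (htoplt (n+1)).le)).le
    obtain ⟨w, hw, p, hp⟩ := DecisionAux.Rw_covers X f (tn n) n hP r hr1 hfr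
    exact ⟨w, hw.trans hγδ, p, hp⟩
  · left
    intro r hr γ hγ
    by_contra hcon
    push_neg at hcon
    exact hP ⟨r, (htn_le_t n).trans hr, γ, hγ, fun s hs hfs => hcon s hs hfs⟩
end

section
/- Let T be a set-theoretic tree with no branching at limit levels and C̄ a transitive and coherent ladder system on T. Then any two tree-incomparable vertices s, t are separated by a finite set in X_C̄: there is a finite F ⊆ T such that every path in X_C̄ from s to t meets F. -/
section Coherent

variable {T : Type*} [PartialOrder T]

/-- `t` is a successor (or minimal) element: its set of strict predecessors has a
maximum, or is empty. -/
def IsSuccElt (t : T) : Prop :=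
  (∃ m, m < t ∧ ∀ x < t, x ≤ m) ∨ ¬ ∃ x, x < t

/-- `t` is a limit element: it has strict predecessors but no largest one. -/
def IsLimElt (t : T) : Prop :=
  (∃ x, x < t) ∧ ¬ ∃ m, m < t ∧ ∀ x < t, x ≤ m

/-- A true ladder system: `η t = {t}` for successor `t`, and for limit `t` a cofinal
subset of `t↓` of order type `ω`. -/
def IsTrueLadder (η : T → Set T) : Prop :=
  ∀ t : T,
    (IsSuccElt t → η t = {t}) ∧
    (IsLimElt t → η t ⊆ Set.Iio t ∧ (∀ r < t, ∃ c ∈ η t, r ≤ c) ∧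
      (η t).Infinite ∧ ∀ s ∈ η t, (η t ∩ Set.Iio s).Finite)

/-- Coherence of a ladder system `C`, witnessed by a true ladder system `η`:
(1) for `t` with `C t` infinite and `s ∈ C t` with `C s` finite, `C s = C t ∩ s↓`;
(2) for `s, t` in the support with `s ∈ C t`, `η t ∩ s↓` is an initial segment of
`η s`; and
(3) `C t` and `C s` agree below `r`, where `r` is the immediate successor, on the chain
below `s`, of the maximum of `η t ∩ s↓`. -/
def IsCoherent (C : T → Set T) (η : T → Set T) : Prop :=
  (∀ t : T, (C t).Infinite → ∀ s ∈ C t, (C s).Finite → C s = C t ∩ Set.Iio s) ∧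
  (∀ s t : T, (C t).Infinite → (C s).Infinite → s ∈ C t →
    (η t ∩ Set.Iio s ⊆ η s ∧
      ∀ a ∈ η t ∩ Set.Iio s, ∀ b ∈ η s, b ≤ a → b ∈ η t ∩ Set.Iio s) ∧
    (∀ m : T, m ∈ η t ∩ Set.Iio s → (∀ x ∈ η t ∩ Set.Iio s, x ≤ m) →
      ∀ r : T, m < r → r ≤ s → (∀ x : T, m < x → x ≤ s → r ≤ x) →
        C t ∩ Set.Iio r = C s ∩ Set.Iio r))

end Coherent

/- ===================  Auxiliary machinery  =================== -/

section SepAux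

variable {T : Type*} [PartialOrder T]

/-- Comparability of two elements below a common vertex, in a tree. -/
lemma sep_chain_le (hwo : ∀ t : T, IsWellOrder {s : T // s < t} (· < ·))
    {v a b : T} (ha : a < v) (hb : b < v) : a ≤ b ∨ b ≤ a := by
  rcases @trichotomous _ (· < ·) (hwo v).toTrichotomous ⟨a, ha⟩ ⟨b, hb⟩ with h | h | h
  · exact Or.inl (Subtype.mk_lt_mk.mp h).le
  · exact Or.inl (le_of_eq (congrArg Subtype.val h))
  · exact Or.inr (Subtype.mk_lt_mk.mp h).le

/-- Induction on trees: every vertex has a well-ordered past, which suffices for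
a global strong induction principle. -/
lemma sep_tree_ind (hwo : ∀ t : T, IsWellOrder {s : T // s < t} (· < ·))
    (S : T → Prop) (step : ∀ x, (∀ y, y < x → S y) → S x) : ∀ x, S x := by
  intro x₀
  have h : ∀ y : {z : T // z < x₀}, S y.1 := by
    intro y
    refine (hwo x₀).toIsWellFounded.wf.induction (C := fun y => S y.1) y ?_
    rintro ⟨a, hax⟩ IH
    exact step a (fun z hz => IH ⟨z, hz.trans hax⟩ (Subtype.mk_lt_mk.mpr hz))
  exact step x₀ fun y hy => h ⟨y, hy⟩

/-- A nonempty subset of a branch has a least element. -/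
lemma sep_exists_least (hwo : ∀ t : T, IsWellOrder {s : T // s < t} (· < ·))
    {v : T} {A : Set T} (hA : ∀ a ∈ A, a ≤ v) (hne : A.Nonempty) :
    ∃ r ∈ A, ∀ z ∈ A, r ≤ z := by
  by_cases hlow : ∃ a ∈ A, a < v
  · obtain ⟨a₀, ha₀A, ha₀⟩ := hlow
    obtain ⟨⟨r, hrv⟩, hrB, hmin⟩ := (hwo v).toIsWellFounded.wf.has_min
      {x : {z : T // z < v} | x.1 ∈ A} ⟨⟨a₀, ha₀⟩, ha₀A⟩
    refine ⟨r, hrB, ?_⟩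
    intro z hz
    rcases eq_or_lt_of_le (hA z hz) with rfl | hzv
    · exact hrv.le
    · rcases sep_chain_le hwo hrv hzv with h | h
      · exact h
      · rcases eq_or_lt_of_le h with h' | h'
        · exact le_of_eq h'.symm
        · exact absurd (Subtype.mk_lt_mk.mpr h') (hmin ⟨z, hzv⟩ hz)
  · push_neg at hlow
    obtain ⟨a, ha⟩ := hne
    have hav : a = v := by
      rcases eq_or_lt_of_le (hA a ha) with h | h
      · exact h
      · exact absurd h (hlow a ha)
    refine ⟨v, hav ▸ ha, ?_⟩
    intro z hz
    rcases eq_or_lt_of_le (hA z hz) with h | h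
    · exact le_of_eq h.symm
    · exact absurd h (hlow z hz)

/-- A finite nonempty chain has a greatest element. -/
lemma sep_exists_max {S : Set T} (hfin : S.Finite) (hne : S.Nonempty)
    (hch : ∀ a ∈ S, ∀ b ∈ S, a ≤ b ∨ b ≤ a) : ∃ mx ∈ S, ∀ z ∈ S, z ≤ mx := by
  obtain ⟨mx, hmem, hmax⟩ := hfin.toFinset.exists_maximal
    (by rw [Set.Finite.toFinset_nonempty]; exact hne)
  have hmemS : mx ∈ S := hfin.mem_toFinset.mp hmem
  refine ⟨mx, hmemS, ?_⟩
  intro z hz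
  rcases hch z hz mx hmemS with h | h
  · exact h
  · rcases eq_or_lt_of_le h with h' | h'
    · exact le_of_eq h'.symm
    · exact absurd (hmax (hfin.mem_toFinset.mpr hz) h'.le) (not_le_of_gt h')

lemma sep_below (hwo : ∀ t : T, IsWellOrder {s : T // s < t} (· < ·))
    {x_s a b : T} (hxa : x_s ≤ a) (hba : b < a) (hnxb : ¬ x_s ≤ b) : b < x_s := by
  rcases eq_or_lt_of_le hxa with h | h
  · rw [h]; exact hba
  · rcases sep_chain_le hwo hba h with h' | h'
    · rcases eq_or_lt_of_le h' with h'' | h''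
      · exact absurd (le_of_eq h''.symm) hnxb
      · exact h''
    · exact absurd h' hnxb

/-- The "low part" of the ladder at `v`, below the branching point `m`. -/
def gset (C : T → Set T) (m v : T) : Set T := C v ∩ Set.Iic m

/-- The relevant "children" of `v`: if `C v` is infinite, the exceptional members of
`C v` (those below the first point of `η v` above `m`, with infinite ladders);
if `C v` is finite, all members of `C v` above `m`. -/
def chset (C η : T → Set T) (m v : T) : Set T :=
  {x | m < x ∧ x ∈ C v ∧
    ((C v).Infinite → (C x).Infinite ∧ ∀ w ∈ η v, m < w → ¬ w < x)}

/-- Iterated passage to children. -/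
def descRel (C η : T → Set T) (m : T) : T → T → Prop :=
  Relation.ReflTransGen (fun a b => b ∈ chset C η m a)

/-- The (finite) separator: union of low parts over all iterated children of `s`. -/
def Kset (C η : T → Set T) (m s : T) : Set T :=
  {a | ∃ z, descRel C η m s z ∧ a ∈ gset C m z}

/-- The key invariant: low parts of all iterated children are inside the separator. -/
def Qp (C η : T → Set T) (m s v : T) : Prop :=
  ∀ z, descRel C η m v z → gset C m z ⊆ Kset C η m s

/-- The strengthened invariant carried along walks. -/
def Qp' (C η : T → Set T) (m s v : T) : Prop :=
  Qp C η m s v ∧ ∀ x ∈ C v, m < x → Qp C η m s x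

variable {C η : T → Set T} {m : T}
variable (hwo : ∀ t : T, IsWellOrder {s : T // s < t} (· < ·))
  (hC : ∀ t : T, C t ⊆ Set.Iio t)
  (hlad : ∀ t : T, (C t).Finite ∨
      ((C t).Infinite ∧ (∀ r < t, ∃ c ∈ C t, r ≤ c) ∧
        ∀ s ∈ C t, (C t ∩ Set.Iio s).Finite))
  (htrans : ∀ t : T, ∀ s ∈ C t, C t ∩ Set.Iio s ⊆ C s)
  (hη : IsTrueLadder η) (hcoh : IsCoherent C η)

include hC hlad in
/-- A vertex with infinite ladder is a limit. -/
lemma sep_inf_isLim {v : T} (hv : (C v).Infinite) : IsLimElt v := by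
  obtain ⟨c₀, hc₀⟩ := hv.nonempty
  rcases hlad v with hfin | ⟨-, hcof, hfs⟩
  · exact absurd hfin hv
  refine ⟨⟨c₀, hC v hc₀⟩, ?_⟩
  rintro ⟨q, hq, hqmax⟩
  obtain ⟨c, hcC, hqc⟩ := hcof q hq
  have hcq : c = q := le_antisymm (hqmax c (hC v hcC)) hqc
  subst hcq
  have : C v ⊆ (C v ∩ Set.Iio c) ∪ {c} := by
    intro x hx
    rcases eq_or_lt_of_le (hqmax x (hC v hx)) with h | h
    · exact Or.inr h
    · exact Or.inl ⟨hx, h⟩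
  exact hv (Set.Finite.subset ((hfs c hcC).union (Set.finite_singleton c)) this)

include hwo hC hlad hη in
/-- `η v` reaches above `m` when `C v` is infinite and `m < v`. -/
lemma sep_eta_above {v : T} (hmv : m < v) (hinf : (C v).Infinite) :
    ∃ w ∈ η v, m < w := by
  have hlim := sep_inf_isLim hC hlad hinf
  obtain ⟨hsub, hcof, -, -⟩ := (hη v).2 hlim
  obtain ⟨y, ⟨hy1, hy2⟩, hyleast⟩ := sep_exists_least hwo (v := v)
    (A := {z | m < z ∧ z ≤ v}) (fun a ha => ha.2) ⟨v, hmv, le_refl v⟩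
  have hyv : y < v := by
    rcases eq_or_lt_of_le hy2 with h | h
    · exfalso
      subst h
      refine hlim.2 ⟨m, hmv, ?_⟩
      intro x hx
      rcases sep_chain_le hwo hx hmv with h' | h'
      · exact h'
      · rcases eq_or_lt_of_le h' with h'' | h''
        · exact le_of_eq h''.symm
        · exact absurd (lt_of_le_of_lt (hyleast x ⟨h'', hx.le⟩) hx) (lt_irrefl _)
    · exact h
  obtain ⟨w, hw, hyw⟩ := hcof y hyv
  exact ⟨w, hw, lt_of_lt_of_le hy1 hyw⟩

include hwo hC hlad hη in
lemma sep_chset_finite {v : T} (hmv : m < v) : (chset C η m v).Finite := by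
  by_cases hinf : (C v).Infinite
  · obtain ⟨w₀, hw₀, hmw₀⟩ := sep_eta_above hwo hC hlad hη hmv hinf
    have hw₀v : w₀ < v := ((hη v).2 (sep_inf_isLim hC hlad hinf)).1 hw₀
    rcases hlad v with hfin | ⟨-, hcof, hfs⟩
    · exact absurd hfin hinf
    obtain ⟨c, hcC, hw₀c⟩ := hcof w₀ hw₀v
    have hsub : chset C η m v ⊆ (C v ∩ Set.Iio c) ∪ {c} := by
      rintro x ⟨hmx, hxC, himp⟩
      have hxw₀ : x ≤ w₀ := by
        rcases sep_chain_le hwo (hC v hxC) hw₀v with h | h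
        · exact h
        · rcases eq_or_lt_of_le h with h' | h'
          · exact le_of_eq h'.symm
          · exact absurd h' ((himp hinf).2 w₀ hw₀ hmw₀)
      rcases eq_or_lt_of_le (le_trans hxw₀ hw₀c) with h | h
      · exact Or.inr h
      · exact Or.inl ⟨hxC, h⟩
    exact Set.Finite.subset ((hfs c hcC).union (Set.finite_singleton c)) hsub
  · exact Set.Finite.subset (Set.not_infinite.mp hinf) (fun x hx => hx.2.1)

include hC hlad in
lemma sep_gset_finite {v : T} (hmv : m < v) : (gset C m v).Finite := by
  by_cases hinf : (C v).Infinite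
  · rcases hlad v with hfin | ⟨-, hcof, hfs⟩
    · exact absurd hfin hinf
    obtain ⟨c, hcC, hmc⟩ := hcof m hmv
    have hsub : gset C m v ⊆ (C v ∩ Set.Iio c) ∪ {c} := by
      rintro a ⟨haC, ham⟩
      rcases eq_or_lt_of_le (le_trans ham hmc) with h | h
      · exact Or.inr h
      · exact Or.inl ⟨haC, h⟩
    exact Set.Finite.subset ((hfs c hcC).union (Set.finite_singleton c)) hsub
  · exact Set.Finite.subset (Set.not_infinite.mp hinf) (fun a ha => ha.1)

lemma sep_desc_gt {v z : T} (h : descRel C η m v z) (hv : m < v) : m < z := by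
  induction h with
  | refl => exact hv
  | tail _ h₂ _ => exact h₂.1

include hwo hC hlad hη in
lemma sep_desc_finite : ∀ v : T, m < v → {z | descRel C η m v z}.Finite := by
  refine sep_tree_ind hwo _ ?_
  intro v IH hmv
  have hsub : {z | descRel C η m v z} ⊆
      {v} ∪ ⋃ x ∈ chset C η m v, {z | descRel C η m x z} := by
    intro z hz
    rcases Relation.ReflTransGen.cases_head hz with h | ⟨x, hx, hxz⟩
    · exact Or.inl h.symm
    · exact Or.inr (Set.mem_biUnion hx hxz)
  refine Set.Finite.subset (Set.Finite.union (Set.finite_singleton v)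
    (Set.Finite.biUnion (sep_chset_finite hwo hC hlad hη hmv) ?_)) hsub
  intro x hx
  exact IH x (hC v hx.2.1) hx.1

include hwo hC hlad hη in
lemma sep_Kset_finite {s : T} (hms : m < s) : (Kset C η m s).Finite := by
  have hsub : Kset C η m s ⊆ ⋃ z ∈ {z | descRel C η m s z}, gset C m z := by
    rintro a ⟨z, hz, ha⟩
    exact Set.mem_biUnion hz ha
  exact Set.Finite.subset (Set.Finite.biUnion (sep_desc_finite hwo hC hlad hη s hms)
    (fun z hz => sep_gset_finite hC hlad (sep_desc_gt hz hms))) hsub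

include hwo hC hlad hη hcoh in
/-- The coherence key: for a non-exceptional child `y'` of `y`, the ladders
agree below some `r > m`, and exceptional children of `y'` are children of `y`. -/
lemma sep_nonexc_key {y y' : T} (hyInf : (C y).Infinite) (hy'Inf : (C y').Infinite)
    (hmem : y' ∈ C y) (hnex : ∃ w ∈ η y, m < w ∧ w < y') :
    ∃ r, m < r ∧ C y ∩ Set.Iio r = C y' ∩ Set.Iio r ∧
      ∀ x ∈ chset C η m y', x ∈ C y ∩ Set.Iio r := by
  have hy'y : y' < y := hC y hmem
  have hlimy := sep_inf_isLim hC hlad hyInf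
  obtain ⟨hsub, hcof, -, hfs⟩ := (hη y).2 hlimy
  obtain ⟨w, hwη, hmw, hwy'⟩ := hnex
  have hSne : (η y ∩ Set.Iio y').Nonempty := ⟨w, hwη, hwy'⟩
  have hSfin : (η y ∩ Set.Iio y').Finite := by
    obtain ⟨c₀, hc₀, hyc₀⟩ := hcof y' hy'y
    exact Set.Finite.subset (hfs c₀ hc₀)
      (fun z hz => ⟨hz.1, lt_of_lt_of_le hz.2 hyc₀⟩)
  have hSchain : ∀ a ∈ η y ∩ Set.Iio y', ∀ b ∈ η y ∩ Set.Iio y', a ≤ b ∨ b ≤ a :=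
    fun a ha b hb => sep_chain_le hwo (hsub ha.1) (hsub hb.1)
  obtain ⟨Mx, hMxS, hMxmax⟩ := sep_exists_max hSfin hSne hSchain
  have h2 := hcoh.2 y' y hyInf hy'Inf hmem
  have hMxη' : Mx ∈ η y' := h2.1.1 hMxS
  have hmMx : m < Mx := lt_of_lt_of_le hmw (hMxmax w ⟨hwη, hwy'⟩)
  obtain ⟨r, ⟨hMxr, hry'⟩, hrleast⟩ := sep_exists_least hwo (v := y')
    (A := {z | Mx < z ∧ z ≤ y'}) (fun a ha => ha.2) ⟨y', hMxS.2, le_refl y'⟩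
  have heq := h2.2 Mx hMxS hMxmax r hMxr hry' (fun x h1 h2' => hrleast x ⟨h1, h2'⟩)
  refine ⟨r, lt_trans hmMx hMxr, heq, ?_⟩
  rintro x ⟨hmx, hxC, himp⟩
  have hxy' : x < y' := hC y' hxC
  have hnot : ¬ Mx < x := (himp hy'Inf).2 Mx hMxη' hmMx
  have hxMx : x ≤ Mx := by
    rcases sep_chain_le hwo hxy' hMxS.2 with h | h
    · exact h
    · rcases eq_or_lt_of_le h with h' | h'
      · exact le_of_eq h'.symm
      · exact absurd h' hnot
  have hmemr : x ∈ C y' ∩ Set.Iio r := ⟨hxC, lt_of_le_of_lt hxMx hMxr⟩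
  rw [← heq] at hmemr
  exact hmemr

include hwo hC hlad hη hcoh in
/-- Down-moves from a vertex with infinite ladder preserve the invariant. -/
lemma sep_lemB {s y : T} (hyInf : (C y).Infinite) (hQ : Qp C η m s y) :
    ∀ y', y' ∈ C y → m < y' → Qp C η m s y' := by
  intro y₀
  refine sep_tree_ind hwo (fun y' => y' ∈ C y → m < y' → Qp C η m s y') ?_ y₀
  intro y' IH hmem hmy'
  by_cases hy'Inf : (C y').Infinite
  · by_cases hnex : ∃ w ∈ η y, m < w ∧ w < y'
    · obtain ⟨r, hmr, heq, hchsub⟩ :=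
        sep_nonexc_key hwo hC hlad hη hcoh hyInf hy'Inf hmem hnex
      intro z hz
      rcases Relation.ReflTransGen.cases_head hz with h | ⟨x, hx, hxz⟩
      · subst h
        rintro a ⟨haC, ham⟩
        have haCr : a ∈ C y' ∩ Set.Iio r := ⟨haC, lt_of_le_of_lt ham hmr⟩
        rw [← heq] at haCr
        exact hQ y Relation.ReflTransGen.refl ⟨haCr.1, ham⟩
      · obtain ⟨hxCy, _⟩ := hchsub x hx
        exact IH x (hC y' hx.2.1) hxCy hx.1 z hxz
    · have hch : y' ∈ chset C η m y :=
        ⟨hmy', hmem, fun _ => ⟨hy'Inf, fun w hw hmw hlt => hnex ⟨w, hw, hmw, hlt⟩⟩⟩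
      intro z hz
      exact hQ z (Relation.ReflTransGen.trans (Relation.ReflTransGen.single hch) hz)
  · have hfin : (C y').Finite := Set.not_infinite.mp hy'Inf
    have heq := hcoh.1 y hyInf y' hmem hfin
    intro z hz
    rcases Relation.ReflTransGen.cases_head hz with h | ⟨x, hx, hxz⟩
    · subst h
      rintro a ⟨haC, ham⟩
      rw [heq] at haC
      exact hQ y Relation.ReflTransGen.refl ⟨haC.1, ham⟩
    · have hxCy' : x ∈ C y' := hx.2.1
      rw [heq] at hxCy'
      exact IH x hxCy'.2 hxCy'.1 hx.1 z hxz

include hwo hC hlad htrans hη hcoh in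
/-- Up-moves preserve the strengthened invariant. -/
lemma sep_lemUp {s : T} :
    ∀ x w, w ∈ C x → m < w → Qp' C η m s w → Qp' C η m s x := by
  refine sep_tree_ind hwo
    (fun x => ∀ w, w ∈ C x → m < w → Qp' C η m s w → Qp' C η m s x) ?_
  intro x IH w hwC hmw hQ'w
  obtain ⟨hQw, hQch⟩ := hQ'w
  have handler : ∀ y, y ∈ C x → m < y → Qp C η m s y := by
    intro y hyC hmy
    rcases sep_chain_le hwo (hC x hyC) (hC x hwC) with h | h
    · rcases eq_or_lt_of_le h with h' | h'
      · rw [h']; exact hQw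
      · exact hQch y (htrans x w hwC ⟨hyC, h'⟩) hmy
    · rcases eq_or_lt_of_le h with h' | h'
      · rw [← h']; exact hQw
      · exact (IH y (hC x hyC) w (htrans x y hyC ⟨hwC, h'⟩) hmw ⟨hQw, hQch⟩).1
  refine ⟨?_, handler⟩
  intro z hz
  rcases Relation.ReflTransGen.cases_head hz with h | ⟨x', hx', hxz⟩
  · subst h
    rintro a ⟨haC, ham⟩
    exact hQw w Relation.ReflTransGen.refl
      ⟨htrans x w hwC ⟨haC, lt_of_le_of_lt ham hmw⟩, ham⟩
  · exact handler x' hx'.2.1 hx'.1 z hxz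

include hwo hC hlad hη hcoh in
/-- Down-moves preserve the strengthened invariant. -/
lemma sep_lemDown {s u y : T} (hQ'u : Qp' C η m s u) (hy : y ∈ C u) (hmy : m < y) :
    Qp' C η m s y := by
  have hQy : Qp C η m s y := hQ'u.2 y hy hmy
  refine ⟨hQy, ?_⟩
  intro x hx hmx
  by_cases hinf : (C y).Infinite
  · exact sep_lemB hwo hC hlad hη hcoh hinf hQy x hx hmx
  · intro z hz
    exact hQy z (Relation.ReflTransGen.trans
      (Relation.ReflTransGen.single ⟨hmx, hx, fun h => absurd h hinf⟩) hz)

include hwo hC hlad hη hcoh in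
/-- The strengthened invariant holds at `s` itself. -/
lemma sep_Qp'_self {s : T} : Qp' C η m s s := by
  have hQs : Qp C η m s s := fun z hz a ha => ⟨z, hz, ha⟩
  refine ⟨hQs, ?_⟩
  intro x hx hmx
  by_cases hinf : (C s).Infinite
  · exact sep_lemB hwo hC hlad hη hcoh hinf hQs x hx hmx
  · intro z hz
    exact hQs z (Relation.ReflTransGen.trans
      (Relation.ReflTransGen.single ⟨hmx, hx, fun h => absurd h hinf⟩) hz)

include hwo hC hlad htrans hη hcoh in
/-- Main walk lemma: every walk from inside the region above `x_s` to the outside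
vertex `t₀` meets the separator. -/
lemma sep_walk {s x_s : T} (hIio : Set.Iio x_s = Set.Iic m) :
    ∀ t₀ u (p : (ladderGraph C).Walk u t₀), ¬ x_s ≤ t₀ → x_s ≤ u → Qp' C η m s u →
      ∃ v ∈ p.support, v ∈ Kset C η m s := by
  have hmxs : m < x_s := by
    have h : m ∈ Set.Iic m := le_refl m
    rw [← hIio] at h
    exact h
  intro t₀ u p
  induction p with
  | nil =>
    intro hxt h _
    exact absurd h hxt
  | @cons a b c hadj p ih =>
    intro hxt hxu hQ'u
    obtain ⟨hne, hor⟩ := hadj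
    by_cases hxw : x_s ≤ b
    · have hQ'w : Qp' C η m s b := by
        rcases hor with h | h
        · exact sep_lemUp hwo hC hlad htrans hη hcoh b a h
            (lt_of_lt_of_le hmxs hxu) hQ'u
        · exact sep_lemDown hwo hC hlad hη hcoh hQ'u h (lt_of_lt_of_le hmxs hxw)
      obtain ⟨v, hv, hvK⟩ := ih hxt hxw hQ'w
      refine ⟨v, ?_, hvK⟩
      exact List.mem_cons_of_mem _ hv
    · rcases hor with h | h
      · exact absurd (le_trans hxu (hC b h).le) hxw
      · have hbxs : b < x_s := sep_below hwo hxu (hC a h) hxw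
        have hbm : b ≤ m := by
          have hb : b ∈ Set.Iio x_s := hbxs
          rw [hIio] at hb
          exact hb
        refine ⟨b, ?_, hQ'u.1 a Relation.ReflTransGen.refl ⟨h, hbm⟩⟩
        exact List.mem_cons_of_mem _ (SimpleGraph.Walk.start_mem_support p)

include hwo hC in
/-- When the branch below `x_s` is empty, no walk can leave the region above `x_s`. -/
lemma sep_no_walk {x_s : T} (hIio : Set.Iio x_s = (∅ : Set T)) :
    ∀ t₀ u (p : (ladderGraph C).Walk u t₀), ¬ x_s ≤ t₀ → x_s ≤ u → False := by
  intro t₀ u p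
  induction p with
  | nil => intro hxt h; exact hxt h
  | @cons a b c hadj p ih =>
    intro hxt hxu
    obtain ⟨hne, hor⟩ := hadj
    by_cases hxw : x_s ≤ b
    · exact ih hxt hxw
    · rcases hor with h | h
      · exact hxw (le_trans hxu (hC b h).le)
      · have hbxs : b < x_s := sep_below hwo hxu (hC a h) hxw
        have hb : b ∈ Set.Iio x_s := hbxs
        rw [hIio] at hb
        exact hb

end SepAux

/-- If `T` is a set-theoretic tree with no branching at limit levels and `C` is a
transitive and coherent ladder system on `T`, then any two tree-incomparable vertices
are separated by a finite set in the graph `X_C`. -/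
theorem coherent_finite_separation {T : Type*} [PartialOrder T]
    (hwo : ∀ t : T, IsWellOrder {s : T // s < t} (· < ·))
    (hbr : ∀ s t : T, Set.Iio s = Set.Iio t → IsLimElt s → IsLimElt t → s = t)
    (C : T → Set T)
    (hC : ∀ t : T, C t ⊆ Set.Iio t)
    (hlad : ∀ t : T, (C t).Finite ∨
      ((C t).Infinite ∧ (∀ r < t, ∃ c ∈ C t, r ≤ c) ∧
        ∀ s ∈ C t, (C t ∩ Set.Iio s).Finite))
    (htrans : ∀ t : T, ∀ s ∈ C t, C t ∩ Set.Iio s ⊆ C s)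
    (η : T → Set T) (hη : IsTrueLadder η) (hcoh : IsCoherent C η) :
    ∀ s t : T, ¬ s ≤ t → ¬ t ≤ s →
      ∃ F : Finset T, s ∉ F ∧ t ∉ F ∧
        ∀ p : (ladderGraph C).Walk s t, ∃ v ∈ p.support, v ∈ F := by
  intro s t hst hts
  classical
  by_cases hmax : ∃ m ∈ Set.Iio s ∩ Set.Iio t, ∀ a ∈ Set.Iio s ∩ Set.Iio t, a ≤ m
  · -- the common branch has a maximum `m`
    obtain ⟨m, hmA, hAmax⟩ := hmax
    have hms : m < s := hmA.1
    have hmt : m < t := hmA.2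
    obtain ⟨x_s, ⟨hxs_s, hxs_nA⟩, hxleast⟩ := sep_exists_least hwo (v := s)
      (A := {v | v ≤ s ∧ v ∉ Set.Iio s ∩ Set.Iio t}) (fun a ha => ha.1)
      ⟨s, le_refl s, fun hs => lt_irrefl s hs.1⟩
    have hIio : Set.Iio x_s = Set.Iic m := by
      ext v
      constructor
      · intro hv
        by_cases hvA : v ∈ Set.Iio s ∩ Set.Iio t
        · exact hAmax v hvA
        · exact absurd (hxleast v ⟨(lt_of_lt_of_le hv hxs_s).le, hvA⟩) hv.not_ge
      · intro hv
        have hvA : v ∈ Set.Iio s ∩ Set.Iio t :=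
          ⟨lt_of_le_of_lt hv hms, lt_of_le_of_lt hv hmt⟩
        have hnxv : ¬ x_s ≤ v := fun hle =>
          hxs_nA ⟨lt_of_le_of_lt hle hvA.1, lt_of_le_of_lt hle hvA.2⟩
        rcases eq_or_lt_of_le hxs_s with h | h
        · rw [h]; exact hvA.1
        · rcases sep_chain_le hwo hvA.1 h with h' | h'
          · rcases eq_or_lt_of_le h' with h'' | h''
            · exact absurd (le_of_eq h''.symm) hnxv
            · exact h''
          · exact absurd h' hnxv
    have hxt : ¬ x_s ≤ t := by
      intro hle
      rcases eq_or_lt_of_le hxs_s with h | h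
      · exact hst (h ▸ hle)
      · rcases eq_or_lt_of_le hle with h' | h'
        · exact hts (le_trans (le_of_eq h'.symm) h.le)
        · exact hxs_nA ⟨h, h'⟩
    have hfinK : (Kset C η m s).Finite := sep_Kset_finite hwo hC hlad hη hms
    refine ⟨hfinK.toFinset, ?_, ?_, ?_⟩
    · intro hs
      obtain ⟨z, -, -, hsm⟩ := hfinK.mem_toFinset.mp hs
      exact absurd (lt_of_le_of_lt hsm hms) (lt_irrefl s)
    · intro ht
      obtain ⟨z, -, -, htm⟩ := hfinK.mem_toFinset.mp ht
      exact absurd (lt_of_le_of_lt htm hmt) (lt_irrefl t)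
    · intro p
      obtain ⟨v, hv, hvK⟩ := sep_walk hwo hC hlad htrans hη hcoh hIio t s p hxt
        hxs_s (sep_Qp'_self hwo hC hlad hη hcoh)
      exact ⟨v, hv, hfinK.mem_toFinset.mpr hvK⟩
  · rcases Set.eq_empty_or_nonempty (Set.Iio s ∩ Set.Iio t) with hAe | hAne
    · -- the common branch is empty: no walks at all
      obtain ⟨x_s, hxs_mem, hxleast⟩ := sep_exists_least hwo (v := s)
        (A := Set.Iic s) (fun a ha => ha) ⟨s, le_refl s⟩
      have hIio : Set.Iio x_s = (∅ : Set T) := by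
        ext z
        simp only [Set.mem_empty_iff_false, iff_false, Set.mem_Iio]
        intro hz
        exact absurd (hxleast z (le_trans hz.le hxs_mem)) hz.not_ge
      have hxt : ¬ x_s ≤ t := by
        intro hle
        rcases eq_or_lt_of_le hxs_mem with h | h
        · exact hst (h ▸ hle)
        · rcases eq_or_lt_of_le hle with h' | h'
          · exact hts (le_trans (le_of_eq h'.symm) h.le)
          · exact Set.eq_empty_iff_forall_notMem.mp hAe x_s ⟨h, h'⟩
      refine ⟨∅, Finset.notMem_empty s, Finset.notMem_empty t, ?_⟩
      intro p
      exact (sep_no_walk hwo hC hIio t s p hxt hxs_mem).elim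
    · -- the common branch is nonempty with no maximum: contradiction with `hbr`
      exfalso
      obtain ⟨x_s, ⟨hxs_s, hxs_nA⟩, hxsleast⟩ := sep_exists_least hwo (v := s)
        (A := {v | v ≤ s ∧ v ∉ Set.Iio s ∩ Set.Iio t}) (fun a ha => ha.1)
        ⟨s, le_refl s, fun hs => lt_irrefl s hs.1⟩
      obtain ⟨x_t, ⟨hxt_t, hxt_nA⟩, hxtleast⟩ := sep_exists_least hwo (v := t)
        (A := {v | v ≤ t ∧ v ∉ Set.Iio s ∩ Set.Iio t}) (fun a ha => ha.1)
        ⟨t, le_refl t, fun ht => lt_irrefl t ht.2⟩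
      have hIs : Set.Iio x_s = Set.Iio s ∩ Set.Iio t := by
        ext v
        constructor
        · intro hv
          by_cases hvA : v ∈ Set.Iio s ∩ Set.Iio t
          · exact hvA
          · exact absurd (hxsleast v ⟨(lt_of_lt_of_le hv hxs_s).le, hvA⟩)
              hv.not_ge
        · intro hvA
          have hnxv : ¬ x_s ≤ v := fun hle =>
            hxs_nA ⟨lt_of_le_of_lt hle hvA.1, lt_of_le_of_lt hle hvA.2⟩
          rcases eq_or_lt_of_le hxs_s with h | h
          · rw [h]; exact hvA.1
          · rcases sep_chain_le hwo hvA.1 h with h' | h'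
            · rcases eq_or_lt_of_le h' with h'' | h''
              · exact absurd (le_of_eq h''.symm) hnxv
              · exact h''
            · exact absurd h' hnxv
      have hIt : Set.Iio x_t = Set.Iio s ∩ Set.Iio t := by
        ext v
        constructor
        · intro hv
          by_cases hvA : v ∈ Set.Iio s ∩ Set.Iio t
          · exact hvA
          · exact absurd (hxtleast v ⟨(lt_of_lt_of_le hv hxt_t).le, hvA⟩)
              hv.not_ge
        · intro hvA
          have hnxv : ¬ x_t ≤ v := fun hle =>
            hxt_nA ⟨lt_of_le_of_lt hle hvA.1, lt_of_le_of_lt hle hvA.2⟩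
          rcases eq_or_lt_of_le hxt_t with h | h
          · rw [h]; exact hvA.2
          · rcases sep_chain_le hwo hvA.2 h with h' | h'
            · rcases eq_or_lt_of_le h' with h'' | h''
              · exact absurd (le_of_eq h''.symm) hnxv
              · exact h''
            · exact absurd h' hnxv
      have hlim_s : IsLimElt x_s := by
        constructor
        · obtain ⟨a, ha⟩ := hAne
          rw [← hIs] at ha
          exact ⟨a, ha⟩
        · rintro ⟨q, hq, hqmax⟩
          have hqA : q ∈ Set.Iio s ∩ Set.Iio t := by rw [← hIs]; exact hq
          refine hmax ⟨q, hqA, ?_⟩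
          intro a ha
          rw [← hIs] at ha
          exact hqmax a ha
      have hlim_t : IsLimElt x_t := by
        constructor
        · obtain ⟨a, ha⟩ := hAne
          rw [← hIt] at ha
          exact ⟨a, ha⟩
        · rintro ⟨q, hq, hqmax⟩
          have hqA : q ∈ Set.Iio s ∩ Set.Iio t := by rw [← hIt]; exact hq
          refine hmax ⟨q, hqA, ?_⟩
          intro a ha
          rw [← hIt] at ha
          exact hqmax a ha
      have heq : x_s = x_t := hbr x_s x_t (hIs.trans hIt.symm) hlim_s hlim_t
      rcases eq_or_lt_of_le hxs_s with h | h
      · exact hst (le_trans (le_of_eq h.symm) (le_trans (le_of_eq heq) hxt_t))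
      · rcases eq_or_lt_of_le hxt_t with h' | h'
        · exact hts (le_trans (le_of_eq h'.symm) (le_trans (le_of_eq heq.symm) h.le))
        · exact hxs_nA ⟨h, heq ▸ h'⟩
end
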